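/- For every natural number n ≥ 3, 41 times the n-th power of the 3×3 matrix H = [[1,1,1],[1,0,0],[0,1,0]] (over the integers) equals the 3×3 matrix with first row (10H_{n+1} + 16H_n + 7H_{n-1}, 10H_n + 26H_{n-1} + 23H_{n-2} + 7H_{n-3}, 10H_n + 16H_{n-1} + 7H_{n-2}), second row (7H_{n+1} + 3H_n + 9H_{n-1}, 7H_n + 10H_{n-1} + 12H_{n-2} + 9H_{n-3}, 7H_n + 3H_{n-1} + 9H_{n-2}), and third row (9H_{n+1} - 2H_n - 6H_{n-1}, 9H_n + 7H_{n-1} - 8H_{n-2} - 6H_{n-3}, 9H_n - 2H_{n-1} - 6H_{n-2}). -/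

import Mathlib

/-- The generalized Tribonacci sequence. -/
def genTrib : ℕ → ℤ
  | 0 => 3
  | 1 => 0
  | 2 => 2
  | n + 3 => genTrib (n + 2) + genTrib (n + 1) + genTrib n

/-!
A matrix whose rows have the shape `(c (k+2), c (k+1) + c k, c (k+1))` for sequences `c`
obeying the Tribonacci recurrence is multiplied on the right by `H` when `k` advances by one,
so it equals its value at `k = 0` times `H ^ k`. With `n = k + 3`, each row of the right-hand
side has this shape for a combination `c` of three consecutive terms of `genTrib`, and at
`k = 0` the matrix is `41 • H ^ 3` by direct computation.
-/

section Tribonacci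

variable {R : Type*} [CommRing R]

def IsTribonacci (c : ℕ → R) : Prop :=
  ∀ n, c (n + 3) = c (n + 2) + c (n + 1) + c n

theorem isTribonacci_genTrib : IsTribonacci genTrib := fun _ => rfl

theorem IsTribonacci.add_shifts {u : ℕ → R} (hu : IsTribonacci u) (a b d : R) :
    IsTribonacci fun k => a * u (k + 2) + b * u (k + 1) + d * u k := fun n => by
  linear_combination a * hu (n + 2) + b * hu (n + 1) + d * hu n

variable (R) in
def tribonacciMatrix : Matrix (Fin 3) (Fin 3) R :=
  !![1, 1, 1; 1, 0, 0; 0, 1, 0]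

def tribonacciRows {ι : Type*} (c : ι → ℕ → R) (n : ℕ) : Matrix ι (Fin 3) R :=
  Matrix.of fun i => ![c i (n + 2), c i (n + 1) + c i n, c i (n + 1)]

variable {ι : Type*} {c : ι → ℕ → R}

theorem tribonacciRows_succ (hc : ∀ i, IsTribonacci (c i)) (n : ℕ) :
    tribonacciRows c (n + 1) = tribonacciRows c n * tribonacciMatrix R := by
  ext i j
  fin_cases j <;>
    simp [tribonacciRows, tribonacciMatrix, Matrix.mul_apply, Fin.sum_univ_three, hc i n, add_assoc]

theorem tribonacciRows_eq_mul_pow (hc : ∀ i, IsTribonacci (c i)) (n : ℕ) :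
    tribonacciRows c n = tribonacciRows c 0 * tribonacciMatrix R ^ n := by
  induction n with
  | zero => simp
  | succ n ih => rw [tribonacciRows_succ hc, ih, pow_succ, Matrix.mul_assoc]

end Tribonacci

theorem genTrib_matrix_power (n : ℕ) (hn : 3 ≤ n) :
    (41 : ℤ) • (!![1, 1, 1; 1, 0, 0; 0, 1, 0] : Matrix (Fin 3) (Fin 3) ℤ) ^ n =
      !![10 * genTrib (n + 1) + 16 * genTrib n + 7 * genTrib (n - 1),
         10 * genTrib n + 26 * genTrib (n - 1) + 23 * genTrib (n - 2) + 7 * genTrib (n - 3),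
         10 * genTrib n + 16 * genTrib (n - 1) + 7 * genTrib (n - 2);
         7 * genTrib (n + 1) + 3 * genTrib n + 9 * genTrib (n - 1),
         7 * genTrib n + 10 * genTrib (n - 1) + 12 * genTrib (n - 2) + 9 * genTrib (n - 3),
         7 * genTrib n + 3 * genTrib (n - 1) + 9 * genTrib (n - 2);
         9 * genTrib (n + 1) - 2 * genTrib n - 6 * genTrib (n - 1),
         9 * genTrib n + 7 * genTrib (n - 1) - 8 * genTrib (n - 2) - 6 * genTrib (n - 3),
         9 * genTrib n - 2 * genTrib (n - 1) - 6 * genTrib (n - 2)] := by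
  obtain ⟨m, rfl⟩ : ∃ m, n = m + 3 := ⟨n - 3, by omega⟩
  set c : Fin 3 → ℕ → ℤ := fun i k =>
    ![10, 7, 9] i * genTrib (k + 2) + ![16, 3, -2] i * genTrib (k + 1) + ![7, 9, -6] i * genTrib k
  have hc : ∀ i, IsTribonacci (c i) := fun i => isTribonacci_genTrib.add_shifts _ _ _
  have hc₀ : tribonacciRows c 0 = 41 • tribonacciMatrix ℤ ^ 3 := by decide
  calc 41 • tribonacciMatrix ℤ ^ (m + 3) = tribonacciRows c 0 * tribonacciMatrix ℤ ^ m := by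
        rw [hc₀, smul_mul_assoc, ← pow_add, add_comm]
    _ = tribonacciRows c m := (tribonacciRows_eq_mul_pow hc m).symm
    _ = _ := by
        ext i j
        fin_cases i <;> fin_cases j <;>
          simp [c, tribonacciRows, genTrib] <;> ring
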